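/- For every ε > 0 there exists η > 0 with the following property. Let X, Y ⊆ ℝ^n be closed nonempty sets with d(X,Y) = 2R > 0, and write x(p) = d(p, X), y(p) = d(p, Y). Suppose p, q ∈ ℝ^n, u, v are unit vectors with p − x(p)·u ∈ X and q + y(q)·v ∈ Y, and |x(p) − R| ≤ η/2, |y(q) − R| ≤ η/2, ‖p − q‖ ≤ η/2, with R ≥ 1. Then ‖u − v‖ < ε. -/

import Mathlib

/-!
If `u` and `v` are unit vectors, then
`‖x • u + y • v‖² = (x + y)² - x y ‖u - v‖²`, so the segment of length `x + y` bent at angle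
`∠(u, v)` loses length quadratically in `‖u - v‖`. The endpoints `p - x(p) u ∈ X` and
`q + y(q) v ∈ Y` are at distance at least `2R ≈ x(p) + y(q)`, while `p ≈ q`; hence
`‖x(p) u + y(q) v‖` is almost `x(p) + y(q)`, which forces `u ≈ v`. Since `x(p), y(q) ≥ 1/2`
once `R ≥ 1`, the loss controls `‖u - v‖` uniformly in `R`.
-/

/-- The distance between two sets: `inf {dist a b : a ∈ A, b ∈ B}`. -/
noncomputable def setDist {N : Type*} [MetricSpace N] (A B : Set N) : ℝ :=
  sInf (Set.image2 dist A B)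

theorem setDist_le_dist {N : Type*} [MetricSpace N] {A B : Set N} {a b : N}
    (ha : a ∈ A) (hb : b ∈ B) : setDist A B ≤ dist a b :=
  csInf_le ⟨0, by rintro _ ⟨_, -, _, -, rfl⟩; exact dist_nonneg⟩ (Set.mem_image2_of_mem ha hb)

section OffsetDirections

variable {E : Type*} [NormedAddCommGroup E] [InnerProductSpace ℝ E] {u v : E}

theorem norm_smul_add_smul_sq_of_norm_eq_one (hu : ‖u‖ = 1) (hv : ‖v‖ = 1) (x y : ℝ) :
    ‖x • u + y • v‖ ^ 2 = (x + y) ^ 2 - x * y * ‖u - v‖ ^ 2 := by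
  rw [norm_add_sq_real, norm_sub_sq_real, real_inner_smul_left, real_inner_smul_right,
    norm_smul, norm_smul, hu, hv, Real.norm_eq_abs, Real.norm_eq_abs, mul_one, mul_one,
    sq_abs, sq_abs]
  ring

theorem mul_mul_norm_sub_sq_le (hu : ‖u‖ = 1) (hv : ‖v‖ = 1) {x y δ : ℝ}
    (hx : 0 ≤ x) (hy : 0 ≤ y) (hδ : 0 ≤ δ) (h : x + y - δ ≤ ‖x • u + y • v‖) :
    x * y * ‖u - v‖ ^ 2 ≤ 2 * δ * (x + y) := by
  have hsq := norm_smul_add_smul_sq_of_norm_eq_one hu hv x y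
  rcases le_total 0 (x + y - δ) with hpos | hneg
  · nlinarith [pow_le_pow_left₀ hpos h 2]
  · nlinarith [sq_nonneg ‖x • u + y • v‖]

theorem norm_sub_sq_le_of_le_norm_smul_add_smul (hu : ‖u‖ = 1) (hv : ‖v‖ = 1)
    {x y δ σ : ℝ} (hσ : 0 < σ) (hx : σ ≤ x) (hy : σ ≤ y) (hδ : 0 ≤ δ)
    (h : x + y - δ ≤ ‖x • u + y • v‖) :
    ‖u - v‖ ^ 2 ≤ 4 * δ / σ := by
  have hx0 : 0 < x := hσ.trans_le hx
  have hy0 : 0 < y := hσ.trans_le hy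
  have hmain := mul_mul_norm_sub_sq_le hu hv hx0.le hy0.le hδ h
  calc ‖u - v‖ ^ 2 ≤ 2 * δ * (x + y) / (x * y) := by
        rw [le_div_iff₀ (by positivity)]; linarith
    _ = 2 * δ * (1 / x + 1 / y) := by field_simp; ring
    _ ≤ 2 * δ * (1 / σ + 1 / σ) := by gcongr
    _ = 4 * δ / σ := by ring

end OffsetDirections

theorem stmt15 (ε : ℝ) (hε : 0 < ε) :
    ∃ η > 0, ∀ (n : ℕ) (X Y : Set (EuclideanSpace ℝ (Fin n))),
      IsClosed X → IsClosed Y → X.Nonempty → Y.Nonempty →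
      ∀ R : ℝ, 1 ≤ R → setDist X Y = 2 * R →
      ∀ (p q u v : EuclideanSpace ℝ (Fin n)),
        ‖u‖ = 1 → ‖v‖ = 1 →
        p - Metric.infDist p X • u ∈ X →
        q + Metric.infDist q Y • v ∈ Y →
        |Metric.infDist p X - R| ≤ η / 2 →
        |Metric.infDist q Y - R| ≤ η / 2 →
        ‖p - q‖ ≤ η / 2 →
        ‖u - v‖ < ε := by
  -- with `δ = 3η/2` and `σ = 1/2` the offset bound reads `‖u - v‖² ≤ 12 η`
  refine ⟨min 1 (ε ^ 2 / 13), by positivity, ?_⟩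
  intro n X Y _ _ _ _ R hR hXY p q u v hu hv hpX hqY hx hy hpq
  set η := min 1 (ε ^ 2 / 13)
  set x := Metric.infDist p X
  set y := Metric.infDist q Y
  have hη1 : η ≤ 1 := min_le_left _ _
  have hηε : η ≤ ε ^ 2 / 13 := min_le_right _ _
  rw [abs_le] at hx hy
  have hfar : 2 * R ≤ ‖p - q‖ + ‖x • u + y • v‖ := by
    calc 2 * R ≤ dist (p - x • u) (q + y • v) := hXY ▸ setDist_le_dist hpX hqY
      _ = ‖(p - q) - (x • u + y • v)‖ := by rw [dist_eq_norm]; abel_nf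
      _ ≤ ‖p - q‖ + ‖x • u + y • v‖ := norm_sub_le _ _
  have hclose := norm_sub_sq_le_of_le_norm_smul_add_smul hu hv (x := x) (y := y)
    (δ := 3 * η / 2) (σ := 1 / 2) one_half_pos (by linarith) (by linarith)
    (by positivity) (by linarith)
  have h12 : 4 * (3 * η / 2) / (1 / 2) = 12 * η := by ring
  exact lt_of_pow_lt_pow_left₀ 2 hε.le (by nlinarith)
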